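/- Let α ∈ ℝ and let φ : ℝ² → ℝ, φ = φ(t,s), be twice continuously differentiable with φ_s(t,s) > 0 for all (t,s), satisfying the one-dimensional SMHD equation in Lagrangian coordinates with parabolic bottom concave down (b′(φ) = −φ): φ_tt − α² φ_ss + ∂_s(1/φ_s²) + φ = 0. Then the additional conservation law holds identically: ∂_t( φ sin t + φ_t cos t ) − ∂_s( (α² φ_s − 1/φ_s²) cos t ) = 0 for all (t,s). -/

import Mathlib

/-- Partial derivative with respect to the first (time) variable. -/
noncomputable def pt (f : ℝ → ℝ → ℝ) (t s : ℝ) : ℝ := deriv (fun t' => f t' s) t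

/-- Partial derivative with respect to the second (space) variable. -/
noncomputable def ps (f : ℝ → ℝ → ℝ) (t s : ℝ) : ℝ := deriv (fun s' => f t s') s

/-!
Multiplying the equation by `cos t` gives the identity: since `(sin t)' = cos t` and
`(cos t)' = -sin t`, the time derivative of the density `φ sin t + φ_t cos t` is
`(φ + φ_tt) cos t`, and the space derivative of the flux is
`(α² φ_ss - ∂_s (1 / φ_s²)) cos t`.
-/

open Real

section PartialDerivatives

variable {f : ℝ → ℝ → ℝ}

lemma contDiff_comp_prodMk_left {n : WithTop ℕ∞} (hf : ContDiff ℝ n (fun p : ℝ × ℝ => f p.1 p.2))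
    (s : ℝ) : ContDiff ℝ n (fun t => f t s) :=
  hf.comp (contDiff_id.prodMk contDiff_const)

lemma contDiff_comp_prodMk_right {n : WithTop ℕ∞} (hf : ContDiff ℝ n (fun p : ℝ × ℝ => f p.1 p.2))
    (t : ℝ) : ContDiff ℝ n (fun s => f t s) :=
  hf.comp (contDiff_const.prodMk contDiff_id)

lemma differentiable_pt_of_contDiff_two (hf : ContDiff ℝ 2 (fun p : ℝ × ℝ => f p.1 p.2))
    (s : ℝ) : Differentiable ℝ (fun t => pt f t s) :=
  (contDiff_comp_prodMk_left hf s).differentiable_deriv_two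

lemma differentiable_ps_of_contDiff_two (hf : ContDiff ℝ 2 (fun p : ℝ × ℝ => f p.1 p.2))
    (t : ℝ) : Differentiable ℝ (fun s => ps f t s) :=
  (contDiff_comp_prodMk_right hf t).differentiable_deriv_two

lemma ps_mul_right (g : ℝ → ℝ → ℝ) (c : ℝ → ℝ) (t s : ℝ) :
    ps (fun t s => g t s * c t) t s = ps g t s * c t :=
  deriv_mul_const_field _

lemma pt_mul_sin_add_pt_mul_cos {t s : ℝ} (hf : DifferentiableAt ℝ (fun t => f t s) t)
    (hft : DifferentiableAt ℝ (fun t => pt f t s) t) :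
    pt (fun t s => f t s * sin t + pt f t s * cos t) t s = (f t s + pt (pt f) t s) * cos t := by
  have h : HasDerivAt (fun t => f t s * sin t + pt f t s * cos t)
      (pt f t s * sin t + f t s * cos t + (pt (pt f) t s * cos t + pt f t s * -sin t)) t :=
    (hf.hasDerivAt.mul (hasDerivAt_sin t)).add (hft.hasDerivAt.mul (hasDerivAt_cos t))
  rw [pt, h.deriv]
  ring

lemma ps_const_mul_sub_inv_sq {t s : ℝ} (c : ℝ) (hfs : DifferentiableAt ℝ (fun s => ps f t s) s)
    (hne : ps f t s ≠ 0) :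
    ps (fun t s => c * ps f t s - 1 / (ps f t s) ^ 2) t s
      = c * ps (ps f) t s - ps (fun t s => 1 / (ps f t s) ^ 2) t s := by
  have hinv : DifferentiableAt ℝ (fun s => 1 / (ps f t s) ^ 2) s :=
    (differentiableAt_const 1).div (hfs.pow 2) (pow_ne_zero 2 hne)
  exact ((hfs.hasDerivAt.const_mul c).sub hinv.hasDerivAt).deriv

end PartialDerivatives

theorem smhd_parabolic_down_cl1
    (α : ℝ) (φ : ℝ → ℝ → ℝ)
    (hφ : ContDiff ℝ 2 (fun p : ℝ × ℝ => φ p.1 p.2))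
    (hpos : ∀ t s, 0 < ps φ t s)
    (hpde : ∀ t s,
      pt (pt φ) t s - α ^ 2 * ps (ps φ) t s
        + ps (fun t s => 1 / (ps φ t s) ^ 2) t s + φ t s = 0) :
    ∀ t s,
      pt (fun t s => φ t s * Real.sin t + pt φ t s * Real.cos t) t s
        - ps (fun t s =>
            (α ^ 2 * ps φ t s - 1 / (ps φ t s) ^ 2) * Real.cos t) t s = 0 := by
  intro t s
  have hφt : Differentiable ℝ (fun t => φ t s) :=
    (contDiff_comp_prodMk_left hφ s).differentiable two_ne_zero
  rw [pt_mul_sin_add_pt_mul_cos (hφt t) (differentiable_pt_of_contDiff_two hφ s t),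
    ps_mul_right, ps_const_mul_sub_inv_sq _ (differentiable_ps_of_contDiff_two hφ t s)
      (hpos t s).ne']
  linear_combination cos t * hpde t s
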